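/- Let Q = B_∞ = {x ∈ ℝⁿ : ‖x‖_∞ ≤ 1}, p ∈ ℝⁿ, and take the linear regularizer ψ(x) = p·x. Then for every ε ≥ 0, P(ERᶜ(ε)) ≤ ε·‖p‖·√n + ½ε²·‖p‖². -/

import Mathlib

open MeasureTheory Set Metric Pointwise RealInnerProductSpace

noncomputable section

/-- Standard Gaussian measure of a set in `ℝⁿ`. -/
def gauss {n : ℕ} (B : Set (EuclideanSpace ℝ (Fin n))) : ℝ :=
  ∫ x in B, (2 * Real.pi) ^ (-(n : ℝ) / 2) * Real.exp (-‖x‖ ^ 2 / 2)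

/-- Solution set of `P₀(g)`: minimize `-g·x` over `Q`. -/
def sol0 {n : ℕ} (Q : Set (EuclideanSpace ℝ (Fin n))) (g : EuclideanSpace ℝ (Fin n)) :
    Set (EuclideanSpace ℝ (Fin n)) :=
  {x ∈ Q | ∀ y ∈ Q, -⟪g, x⟫ ≤ -⟪g, y⟫}

/-- Solution set of `P_ε(g)`: minimize `-g·x + εψ(x)` over `Q` (here `dom ψ = ℝⁿ`). -/
def solReg {n : ℕ} (Q : Set (EuclideanSpace ℝ (Fin n))) (ψ : EuclideanSpace ℝ (Fin n) → ℝ)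
    (ε : ℝ) (g : EuclideanSpace ℝ (Fin n)) : Set (EuclideanSpace ℝ (Fin n)) :=
  {x ∈ Q | ∀ y ∈ Q, -⟪g, x⟫ + ε * ψ x ≤ -⟪g, y⟫ + ε * ψ y}

/-- The exact regularization event: `P₀(g)` has a unique solution which also solves `P_ε(g)`. -/
def ER {n : ℕ} (Q : Set (EuclideanSpace ℝ (Fin n))) (ψ : EuclideanSpace ℝ (Fin n) → ℝ)
    (ε : ℝ) : Set (EuclideanSpace ℝ (Fin n)) :=
  {g | ∃ z, sol0 Q g = {z} ∧ z ∈ solReg Q ψ ε g}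

/-- The unit `ℓ∞` ball in `ℝⁿ`. -/
def Binf (n : ℕ) : Set (EuclideanSpace ℝ (Fin n)) := {x | ∀ i, |x i| ≤ 1}

/-!
If no coordinate `gᵢ` lies between `0` and `ε pᵢ`, then `g` and `g - ε p` have the same strict
sign pattern `σ ∈ {-1, 1}ⁿ`. The vertex `σ` is then the unique maximizer of `⟪g, ·⟫` on the cube
and also maximizes `⟪g - ε p, ·⟫`, i.e. solves `P_ε(g)`. So `ERᶜ(ε)` is covered by the `n` slabs
`{g | gᵢ ∈ [0, ε pᵢ]}`. As the one-dimensional standard normal density is at most `1`, the slab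
`i` has Gaussian measure at most `ε |pᵢ|`, and `∑ |pᵢ| ≤ √n ‖p‖` by Cauchy–Schwarz.
-/

open ProbabilityTheory

theorem measurableEmbedding_toLp (ι : Type*) [Fintype ι] :
    MeasurableEmbedding (WithLp.toLp 2 : (ι → ℝ) → EuclideanSpace ℝ ι) :=
  (MeasurableEquiv.toLp 2 (ι → ℝ)).measurableEmbedding

theorem pi_gaussianReal_eq_withDensity (ι : Type*) [Fintype ι] :
    Measure.pi (fun _ : ι => gaussianReal 0 1) =
      volume.withDensity (fun x => ∏ i, gaussianPDF 0 1 (x i)) := by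
  refine Measure.pi_eq fun s hs => ?_
  have hφ : ∀ i, Integrable (gaussianPDFReal 0 1) (volume.restrict (s i)) :=
    fun _ => (integrable_gaussianPDFReal 0 1).restrict
  rw [withDensity_apply _ (MeasurableSet.univ_pi hs), volume_pi, Measure.restrict_pi_pi]
  simp_rw [gaussianPDF, ← ENNReal.ofReal_prod_of_nonneg fun i _ => gaussianPDFReal_nonneg 0 1 _,
    gaussianReal_apply_eq_integral 0 one_ne_zero]
  rw [← ofReal_integral_eq_lintegral_ofReal (Integrable.fintype_prod hφ)
      (ae_of_all _ fun x => Finset.prod_nonneg fun i _ => gaussianPDFReal_nonneg 0 1 _),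
    integral_fintype_prod_eq_prod (𝕜 := ℝ),
    ENNReal.ofReal_prod_of_nonneg fun i _ => integral_nonneg fun x => gaussianPDFReal_nonneg 0 1 x]

theorem gauss_density_eq_prod {n : ℕ} (x : EuclideanSpace ℝ (Fin n)) :
    (2 * Real.pi) ^ (-(n : ℝ) / 2) * Real.exp (-‖x‖ ^ 2 / 2) = ∏ i, gaussianPDFReal 0 1 (x i) := by
  simp only [gaussianPDFReal_def, NNReal.coe_one, mul_one, sub_zero, Finset.prod_mul_distrib,
    Finset.prod_const, Finset.card_univ, Fintype.card_fin, ← Real.exp_sum,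
    EuclideanSpace.norm_sq_eq, Real.norm_eq_abs, sq_abs, ← Finset.sum_neg_distrib, Finset.sum_div]
  congr 1
  rw [Real.sqrt_eq_rpow, ← Real.rpow_neg (by positivity), ← Real.rpow_mul_natCast (by positivity)]
  ring_nf

theorem gauss_eq_stdGaussian {n : ℕ} (S : Set (EuclideanSpace ℝ (Fin n))) :
    gauss S = (stdGaussian (EuclideanSpace ℝ (Fin n)) S).toReal := by
  rw [← map_pi_eq_stdGaussian, (measurableEmbedding_toLp _).map_apply,
    pi_gaussianReal_eq_withDensity, withDensity_apply', gauss]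
  simp_rw [gauss_density_eq_prod]
  rw [← (PiLp.volume_preserving_toLp (Fin n)).setIntegral_preimage_emb (measurableEmbedding_toLp _),
    integral_eq_lintegral_of_nonneg_ae
      (ae_of_all _ fun x => Finset.prod_nonneg fun i _ => gaussianPDFReal_nonneg 0 1 _)
      (Finset.measurable_prod _ fun i _ =>
        (measurable_gaussianPDFReal 0 1).comp (measurable_pi_apply i)).aestronglyMeasurable]
  simp_rw [gaussianPDF, ENNReal.ofReal_prod_of_nonneg fun i _ => gaussianPDFReal_nonneg 0 1 _]

theorem stdGaussian_preimage_eval {ι : Type*} [Fintype ι] (i : ι) {s : Set ℝ}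
    (hs : MeasurableSet s) :
    stdGaussian (EuclideanSpace ℝ ι) {x | x i ∈ s} = gaussianReal 0 1 s := by
  rw [← map_pi_eq_stdGaussian, (measurableEmbedding_toLp ι).map_apply]
  exact (measurePreserving_eval _ i).measure_preimage hs.nullMeasurableSet

theorem gaussianPDFReal_zero_one_le_one (x : ℝ) : gaussianPDFReal 0 1 x ≤ 1 := by
  rw [gaussianPDFReal_def]
  refine mul_le_one₀ (inv_le_one_of_one_le₀ ?_) (Real.exp_nonneg _) (Real.exp_le_one_iff.2 ?_)
  · exact Real.one_le_sqrt.2 (by norm_num; linarith [Real.pi_gt_three])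
  · exact div_nonpos_of_nonpos_of_nonneg (neg_nonpos.2 (sq_nonneg _)) (by positivity)

theorem gaussianReal_zero_one_le_volume (s : Set ℝ) : gaussianReal 0 1 s ≤ volume s := by
  rw [gaussianReal_apply 0 one_ne_zero, ← setLIntegral_one]
  exact lintegral_mono fun x => ENNReal.ofReal_le_one.2 (gaussianPDFReal_zero_one_le_one x)

section LinearOptimizationOnCube

variable {n : ℕ}

theorem real_inner_eq_sum (u v : EuclideanSpace ℝ (Fin n)) : ⟪u, v⟫ = ∑ i, u i * v i := by
  simp [PiLp.inner_apply, mul_comm]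

def signVec (w : EuclideanSpace ℝ (Fin n)) : EuclideanSpace ℝ (Fin n) :=
  WithLp.toLp 2 fun i => (SignType.sign (w i) : ℝ)

theorem signVec_mem_Binf (w : EuclideanSpace ℝ (Fin n)) : signVec w ∈ Binf n := fun i => by
  simp only [signVec]
  generalize SignType.sign (w i) = s
  cases s <;> simp

theorem inner_signVec (w : EuclideanSpace ℝ (Fin n)) : ⟪w, signVec w⟫ = ∑ i, |w i| := by
  simp [real_inner_eq_sum, signVec, self_mul_sign]

theorem mul_le_abs_of_abs_le_one {a y : ℝ} (hy : |y| ≤ 1) : a * y ≤ |a| :=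
  calc a * y ≤ |a| * |y| := (le_abs_self _).trans (abs_mul a y).le
    _ ≤ |a| := mul_le_of_le_one_right (abs_nonneg a) hy

theorem inner_le_sum_abs_of_mem_Binf (w : EuclideanSpace ℝ (Fin n)) {y : EuclideanSpace ℝ (Fin n)}
    (hy : y ∈ Binf n) : ⟪w, y⟫ ≤ ∑ i, |w i| := by
  rw [real_inner_eq_sum]
  exact Finset.sum_le_sum fun i _ => mul_le_abs_of_abs_le_one (hy i)

theorem eq_signVec_of_sum_abs_le_inner {w y : EuclideanSpace ℝ (Fin n)} (hw : ∀ i, w i ≠ 0)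
    (hy : y ∈ Binf n) (h : ∑ i, |w i| ≤ ⟪w, y⟫) : y = signVec w := by
  rw [real_inner_eq_sum] at h
  have hterm : ∀ i, w i * y i = |w i| := by
    have hle : ∀ i ∈ Finset.univ, w i * y i ≤ |w i| := fun i _ => mul_le_abs_of_abs_le_one (hy i)
    intro i
    exact (Finset.sum_eq_sum_iff_of_le hle).1 (le_antisymm (Finset.sum_le_sum hle) h) i
      (Finset.mem_univ i)
  ext i
  exact mul_left_cancel₀ (hw i) ((hterm i).trans (self_mul_sign (w i)).symm)

theorem sol0_Binf_eq_singleton {g : EuclideanSpace ℝ (Fin n)} (hg : ∀ i, g i ≠ 0) :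
    sol0 (Binf n) g = {signVec g} := by
  ext x
  simp only [sol0, mem_ofPred_eq, mem_singleton_iff, neg_le_neg_iff]
  constructor
  · rintro ⟨hx, hmax⟩
    exact eq_signVec_of_sum_abs_le_inner hg hx
      ((inner_signVec g).symm.trans_le (hmax _ (signVec_mem_Binf g)))
  · rintro rfl
    exact ⟨signVec_mem_Binf g, fun y hy =>
      (inner_le_sum_abs_of_mem_Binf g hy).trans_eq (inner_signVec g).symm⟩

theorem signVec_mem_solReg_inner {g p : EuclideanSpace ℝ (Fin n)} {ε : ℝ}
    (h : signVec (g - ε • p) = signVec g) :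
    signVec g ∈ solReg (Binf n) (fun x => ⟪p, x⟫) ε g := by
  refine ⟨signVec_mem_Binf g, fun y hy => ?_⟩
  have key := (inner_le_sum_abs_of_mem_Binf (g - ε • p) hy).trans_eq (inner_signVec _).symm
  rw [h, inner_sub_left, inner_sub_left, real_inner_smul_left, real_inner_smul_left] at key
  linarith

theorem sign_sub_eq_sign_of_notMem_uIcc {a c : ℝ} (h : a ∉ uIcc 0 c) :
    a ≠ 0 ∧ SignType.sign (a - c) = SignType.sign a := by
  simp only [mem_uIcc, not_or, not_and_or, not_le] at h
  rcases lt_trichotomy a 0 with ha | rfl | ha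
  · have hac : a < c := h.2.resolve_right ha.not_gt
    rw [sign_neg ha, sign_neg (sub_neg.2 hac)]
    exact ⟨ha.ne, rfl⟩
  · exact absurd (h.1.resolve_left (lt_irrefl 0)) (h.2.resolve_right (lt_irrefl 0)).not_gt
  · have hca : c < a := h.1.resolve_left ha.not_gt
    rw [sign_pos ha, sign_pos (sub_pos.2 hca)]
    exact ⟨ha.ne', rfl⟩

theorem mem_ER_Binf_inner {g p : EuclideanSpace ℝ (Fin n)} {ε : ℝ}
    (hg : ∀ i, g i ∉ uIcc 0 (ε * p i)) : g ∈ ER (Binf n) (fun x => ⟪p, x⟫) ε := by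
  have hsign i := sign_sub_eq_sign_of_notMem_uIcc (hg i)
  refine ⟨signVec g, sol0_Binf_eq_singleton fun i => (hsign i).1, signVec_mem_solReg_inner ?_⟩
  ext i
  simp [signVec, (hsign i).2]

theorem compl_ER_Binf_inner_subset (p : EuclideanSpace ℝ (Fin n)) (ε : ℝ) :
    (ER (Binf n) (fun x => ⟪p, x⟫) ε)ᶜ ⊆ ⋃ i, {g | g i ∈ uIcc 0 (ε * p i)} := by
  intro g hg
  by_contra h
  simp only [mem_iUnion, mem_ofPred_eq, not_exists] at h
  exact hg (mem_ER_Binf_inner h)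

end LinearOptimizationOnCube

theorem sum_abs_le_sqrt_card_mul_norm {ι : Type*} [Fintype ι] (p : EuclideanSpace ℝ ι) :
    ∑ i, |p i| ≤ √(Fintype.card ι) * ‖p‖ := by
  have hsq : (∑ i, |p i|) ^ 2 ≤ Fintype.card ι * ‖p‖ ^ 2 := by
    simpa [EuclideanSpace.norm_sq_eq, Real.norm_eq_abs] using
      sq_sum_le_card_mul_sum_sq (s := Finset.univ) (f := fun i => |p i|)
  rw [← Real.sqrt_sq (norm_nonneg p), ← Real.sqrt_mul (Nat.cast_nonneg _)]
  exact Real.le_sqrt_of_sq_le hsq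

theorem stdGaussian_compl_ER_Binf_inner_le {n : ℕ} (p : EuclideanSpace ℝ (Fin n)) {ε : ℝ}
    (hε : 0 ≤ ε) :
    stdGaussian (EuclideanSpace ℝ (Fin n)) (ER (Binf n) (fun x => ⟪p, x⟫) ε)ᶜ ≤
      ENNReal.ofReal (ε * ∑ i, |p i|) := by
  calc stdGaussian _ (ER (Binf n) (fun x => ⟪p, x⟫) ε)ᶜ
      ≤ stdGaussian _ (⋃ i, {g : EuclideanSpace ℝ (Fin n) | g i ∈ uIcc 0 (ε * p i)}) :=
        measure_mono (compl_ER_Binf_inner_subset p ε)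
    _ ≤ ∑ i, stdGaussian _ {g : EuclideanSpace ℝ (Fin n) | g i ∈ uIcc 0 (ε * p i)} :=
        measure_iUnion_fintype_le _ _
    _ = ∑ i, gaussianReal 0 1 (uIcc 0 (ε * p i)) := by
        simp_rw [stdGaussian_preimage_eval _ measurableSet_uIcc]
    _ ≤ ∑ i, volume (uIcc 0 (ε * p i)) :=
        Finset.sum_le_sum fun i _ => gaussianReal_zero_one_le_volume _
    _ = ENNReal.ofReal (ε * ∑ i, |p i|) := by
        simp_rw [Real.volume_interval, sub_zero, abs_mul, abs_of_nonneg hε, Finset.mul_sum]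
        exact (ENNReal.ofReal_sum_of_nonneg fun i _ => by positivity).symm

/-- Upper bound on the failure probability of exact regularization for the `ℓ∞` ball with
linear regularization `ψ(x) = p·x`. -/
theorem stmt18 {n : ℕ} (p : EuclideanSpace ℝ (Fin n)) (ε : ℝ) (hε : 0 ≤ ε) :
    gauss (ER (Binf n) (fun x => ⟪p, x⟫) ε)ᶜ ≤
      ε * ‖p‖ * Real.sqrt n + ε ^ 2 * ‖p‖ ^ 2 / 2 := by
  rw [gauss_eq_stdGaussian]
  calc (stdGaussian _ (ER (Binf n) (fun x => ⟪p, x⟫) ε)ᶜ).toReal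
      ≤ ε * ∑ i, |p i| :=
        ENNReal.toReal_le_of_le_ofReal (by positivity) (stdGaussian_compl_ER_Binf_inner_le p hε)
    _ ≤ ε * (Real.sqrt n * ‖p‖) := by
        gcongr; simpa using sum_abs_le_sqrt_card_mul_norm p
    _ ≤ ε * ‖p‖ * Real.sqrt n + ε ^ 2 * ‖p‖ ^ 2 / 2 := by
        nlinarith [sq_nonneg (ε * ‖p‖)]
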